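/- arXiv:2512.24696 — 4 statements merged into one kernel-verified Lean document; each statement's English description precedes it below -/
import Mathlib

section
/- Let W be an invertible diagonal real p×p matrix, V a real p×r_S matrix, U a real p×r_L matrix, and T an invertible real p×p matrix. Set D := (W Wᵀ)⁻¹, A := I_{r_S} + Vᵀ D V, S := D − D V A⁻¹ Vᵀ D, L := S U (I_{r_L} + Uᵀ S U)⁻¹ Uᵀ S, Ω := W Wᵀ + V Vᵀ + U Uᵀ, and Σ := T⁻ᵀ Ω T⁻¹. Then Σ is invertible and its inverse (the observed-level precision) satisfies Σ⁻¹ = T S Tᵀ − T L Tᵀ. -/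
/-!
Ω is built from the positive definite matrix W Wᵀ by two positive semidefinite rank updates,
V Vᵀ and then U Uᵀ. Every intermediate matrix is therefore positive definite, and so is each
capacitance matrix 1 + Uᵀ M⁻¹ U, so each update can be inverted by the Woodbury identity:
the first gives (W Wᵀ + V Vᵀ)⁻¹ = S, the second Ω⁻¹ = S - L.
Finally Σ = T⁻ᵀ Ω T⁻¹ has inverse T Ω⁻¹ Tᵀ.
-/

open Matrix

namespace Matrix

variable {n m : Type*} [Fintype n] [Fintype m]

lemma posDef_mul_transpose_self_of_isUnit [DecidableEq n] {M : Matrix n n ℝ} (hM : IsUnit M) :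
    (M * Mᵀ).PosDef := by
  simpa [conjTranspose_eq_transpose_of_trivial] using
    PosDef.mul_conjTranspose_self M (vecMul_injective_iff_isUnit.mpr hM)

lemma PosDef.add_mul_transpose_self {M : Matrix n n ℝ} (hM : M.PosDef) (U : Matrix n m ℝ) :
    (M + U * Uᵀ).PosDef :=
  hM.add_posSemidef <| by
    simpa [conjTranspose_eq_transpose_of_trivial] using posSemidef_self_mul_conjTranspose U

lemma PosSemidef.one_add_transpose_mul_mul [DecidableEq m] {M : Matrix n n ℝ} (hM : M.PosSemidef)
    (U : Matrix n m ℝ) : (1 + Uᵀ * M * U).PosDef :=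
  PosDef.one.add_posSemidef <| by
    simpa [conjTranspose_eq_transpose_of_trivial] using hM.conjTranspose_mul_mul_same U

lemma PosDef.inv_add_mul_transpose_self [DecidableEq n] [DecidableEq m] {M : Matrix n n ℝ}
    (hM : M.PosDef) (U : Matrix n m ℝ) :
    (M + U * Uᵀ)⁻¹ = M⁻¹ - M⁻¹ * U * (1 + Uᵀ * M⁻¹ * U)⁻¹ * Uᵀ * M⁻¹ := by
  have hcap : IsUnit ((1 : Matrix m m ℝ)⁻¹ + Uᵀ * M⁻¹ * U) := by
    simpa using (hM.inv.posSemidef.one_add_transpose_mul_mul U).isUnit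
  simpa using add_mul_mul_inv_eq_sub M U 1 Uᵀ hM.isUnit isUnit_one hcap

lemma inv_transpose_inv_mul_mul_inv {R : Type*} [CommRing R] [DecidableEq n] {T : Matrix n n R}
    (hT : IsUnit T) (Ω : Matrix n n R) :
    ((Tᵀ)⁻¹ * Ω * T⁻¹)⁻¹ = T * Ω⁻¹ * Tᵀ := by
  have hTdet : IsUnit T.det := (isUnit_iff_isUnit_det T).mp hT
  rw [mul_inv_rev, mul_inv_rev, nonsing_inv_nonsing_inv T hTdet,
    nonsing_inv_nonsing_inv Tᵀ (by rwa [det_transpose]), mul_assoc]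

end Matrix

theorem observed_precision_decomposition_general {p rS rL : ℕ}
    (W : Matrix (Fin p) (Fin p) ℝ) (hW : IsUnit W)
    (V : Matrix (Fin p) (Fin rS) ℝ) (U : Matrix (Fin p) (Fin rL) ℝ)
    (T : Matrix (Fin p) (Fin p) ℝ) (hT : IsUnit T)
    (D : Matrix (Fin p) (Fin p) ℝ) (hD : D = (W * Wᵀ)⁻¹)
    (A : Matrix (Fin rS) (Fin rS) ℝ) (hA : A = 1 + Vᵀ * D * V)
    (S : Matrix (Fin p) (Fin p) ℝ) (hS : S = D - D * V * A⁻¹ * Vᵀ * D)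
    (L : Matrix (Fin p) (Fin p) ℝ) (hL : L = S * U * (1 + Uᵀ * S * U)⁻¹ * Uᵀ * S)
    (Ω : Matrix (Fin p) (Fin p) ℝ) (hΩ : Ω = W * Wᵀ + V * Vᵀ + U * Uᵀ)
    (Sig : Matrix (Fin p) (Fin p) ℝ) (hSig : Sig = (Tᵀ)⁻¹ * Ω * T⁻¹) :
    IsUnit Sig ∧ Sig⁻¹ = T * S * Tᵀ - T * L * Tᵀ := by
  have hWW : (W * Wᵀ).PosDef := posDef_mul_transpose_self_of_isUnit hW
  have hWWV : (W * Wᵀ + V * Vᵀ).PosDef := hWW.add_mul_transpose_self V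
  have hS_inv : (W * Wᵀ + V * Vᵀ)⁻¹ = S := by
    rw [hWW.inv_add_mul_transpose_self, ← hD, ← hA, hS]
  have hΩ_inv : Ω⁻¹ = S - L := by
    rw [hΩ, hWWV.inv_add_mul_transpose_self, hS_inv, hL]
  have hΩ_unit : IsUnit Ω := hΩ ▸ (hWWV.add_mul_transpose_self U).isUnit
  refine ⟨?_, ?_⟩
  · rw [hSig]
    exact ((isUnit_nonsing_inv_iff.mpr ((isUnit_transpose T).mpr hT)).mul hΩ_unit).mul
      (isUnit_nonsing_inv_iff.mpr hT)
  · rw [hSig, inv_transpose_inv_mul_mul_inv hT, hΩ_inv, mul_sub, sub_mul]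

/-- **Observed-level structured-minus-low-rank precision decomposition.**
With `W` invertible diagonal, `V ∈ ℝ^{p×r_S}`, `U ∈ ℝ^{p×r_L}`, `T` invertible,
`D := (W Wᵀ)⁻¹`, `A := I + Vᵀ D V`, `S := D - D V A⁻¹ Vᵀ D`,
`L := S U (I + Uᵀ S U)⁻¹ Uᵀ S`, `Ω := W Wᵀ + V Vᵀ + U Uᵀ`, and
`Σ := T⁻ᵀ Ω T⁻¹`, the matrix `Σ` is invertible and `Σ⁻¹ = T S Tᵀ - T L Tᵀ`. -/
theorem observed_precision_decomposition {p rS rL : ℕ}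
    (W : Matrix (Fin p) (Fin p) ℝ) (hWdiag : W.IsDiag) (hW : IsUnit W)
    (V : Matrix (Fin p) (Fin rS) ℝ) (U : Matrix (Fin p) (Fin rL) ℝ)
    (T : Matrix (Fin p) (Fin p) ℝ) (hT : IsUnit T)
    (D : Matrix (Fin p) (Fin p) ℝ) (hD : D = (W * Wᵀ)⁻¹)
    (A : Matrix (Fin rS) (Fin rS) ℝ) (hA : A = 1 + Vᵀ * D * V)
    (S : Matrix (Fin p) (Fin p) ℝ) (hS : S = D - D * V * A⁻¹ * Vᵀ * D)
    (L : Matrix (Fin p) (Fin p) ℝ) (hL : L = S * U * (1 + Uᵀ * S * U)⁻¹ * Uᵀ * S)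
    (Ω : Matrix (Fin p) (Fin p) ℝ) (hΩ : Ω = W * Wᵀ + V * Vᵀ + U * Uᵀ)
    (Sig : Matrix (Fin p) (Fin p) ℝ) (hSig : Sig = (Tᵀ)⁻¹ * Ω * T⁻¹) :
    IsUnit Sig ∧ Sig⁻¹ = T * S * Tᵀ - T * L * Tᵀ :=
  observed_precision_decomposition_general W hW V U T hT D hD A hA S hS L hL Ω hΩ Sig hSig
end

section
/- Let D be a diagonal real p×p matrix with positive diagonal entries and V a real p×r_S matrix whose columns have pairwise disjoint supports, with |supp(V_{·j})| ≤ s for every column j and with each index i ∈ {1,…,p} belonging to at most c of the supports supp(V_{·j}). Set A := I_{r_S} + Vᵀ D V and S := D − D V A⁻¹ Vᵀ D. Then for every row index i, the number of off-diagonal nonzero entries of row i of S, i.e. |{ℓ ≠ i : S_{iℓ} ≠ 0}|, is at most c(s−1). -/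
open Matrix

/-- **Exact locality of the structured precision under disjoint confounder supports.**
If `D` is diagonal with positive diagonal entries, the columns of `V` have pairwise
disjoint supports of size at most `s`, and each index belongs to at most `c` of these
supports, then with `A := I + Vᵀ D V` and `S := D - D V A⁻¹ Vᵀ D`, every row `i` of `S`
has at most `c * (s - 1)` off-diagonal nonzero entries. -/
theorem structured_precision_row_locality {p rS : ℕ} (s c : ℕ)
    (D : Matrix (Fin p) (Fin p) ℝ) (hDdiag : D.IsDiag) (hDpos : ∀ i, 0 < D i i)
    (V : Matrix (Fin p) (Fin rS) ℝ)
    (hdisj : ∀ j k : Fin rS, j ≠ k → ∀ i : Fin p, V i j = 0 ∨ V i k = 0)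
    (hsupp : ∀ j : Fin rS, {i : Fin p | V i j ≠ 0}.ncard ≤ s)
    (hmem : ∀ i : Fin p, {j : Fin rS | V i j ≠ 0}.ncard ≤ c)
    (A : Matrix (Fin rS) (Fin rS) ℝ) (hA : A = 1 + Vᵀ * D * V)
    (S : Matrix (Fin p) (Fin p) ℝ) (hS : S = D - D * V * A⁻¹ * Vᵀ * D) :
    ∀ i : Fin p, {ℓ : Fin p | ℓ ≠ i ∧ S i ℓ ≠ 0}.ncard ≤ c * (s - 1) := by
  intro i
  -- (D * V) entries
  have hmul : ∀ (x : Fin p) (k : Fin rS), (D * V) x k = D x x * V x k := by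
    intro x k
    rw [Matrix.mul_apply]
    refine Finset.sum_eq_single x (fun y _ hy => ?_) (fun h => absurd (Finset.mem_univ x) h)
    rw [hDdiag hy.symm, zero_mul]
  -- A is diagonal
  have hAd : A.IsDiag := by
    intro j k hjk
    rw [hA]
    have hjk' : (Vᵀ * D * V) j k = ∑ x, V x j * (D x x * V x k) := by
      rw [Matrix.mul_assoc, Matrix.mul_apply]
      refine Finset.sum_congr rfl fun x _ => ?_
      rw [hmul, Matrix.transpose_apply]
    have hz : (Vᵀ * D * V) j k = 0 := by
      rw [hjk']
      refine Finset.sum_eq_zero fun x _ => ?_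
      rcases hdisj j k hjk x with h | h <;> simp [h]
    simp [Matrix.add_apply, Matrix.one_apply_ne hjk, hz]
  -- A⁻¹ is diagonal
  have hBdiag : (A⁻¹).IsDiag := by
    rw [← hAd.diagonal_diag, Matrix.inv_diagonal]
    exact Matrix.isDiag_diagonal _
  -- key: nonzero off-diagonal entry of S forces a shared support column
  have key : ∀ ℓ, ℓ ≠ i → S i ℓ ≠ 0 → ∃ j, V i j ≠ 0 ∧ V ℓ j ≠ 0 := by
    intro ℓ hne hS0
    by_contra hcon
    push_neg at hcon
    apply hS0
    have hM : ∀ j : Fin rS, (D * V * A⁻¹) i j = D i i * V i j * A⁻¹ j j := by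
      intro j
      rw [Matrix.mul_apply, show D i i * V i j * A⁻¹ j j = (D * V) i j * A⁻¹ j j by
        rw [hmul]]
      exact Finset.sum_eq_single j (fun k _ hk => by rw [hBdiag hk, mul_zero])
        (fun h => absurd (Finset.mem_univ j) h)
    have hMV : (D * V * A⁻¹ * Vᵀ) i ℓ = 0 := by
      rw [Matrix.mul_apply]
      refine Finset.sum_eq_zero fun j _ => ?_
      rw [hM, Matrix.transpose_apply]
      by_cases hij : V i j = 0
      · simp [hij]
      · rw [hcon j hij, mul_zero]
    have h2 : (D * V * A⁻¹ * Vᵀ * D) i ℓ = 0 := by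
      rw [Matrix.mul_apply]
      refine Finset.sum_eq_zero fun k _ => ?_
      by_cases hk : k = ℓ
      · subst hk; rw [hMV, zero_mul]
      · rw [hDdiag hk, mul_zero]
    rw [hS, Matrix.sub_apply, h2, hDdiag hne.symm, sub_zero]
  -- counting
  set J : Finset (Fin rS) := Finset.univ.filter (fun j => V i j ≠ 0) with hJ
  set B : Finset (Fin p) :=
    J.biUnion (fun j => (Finset.univ.filter fun ℓ => V ℓ j ≠ 0).erase i) with hB
  have hsub : {ℓ : Fin p | ℓ ≠ i ∧ S i ℓ ≠ 0} ⊆ ↑B := by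
    rintro ℓ ⟨h1, h2⟩
    obtain ⟨j, hj1, hj2⟩ := key ℓ h1 h2
    simp only [hB, hJ, Finset.coe_biUnion, Set.mem_iUnion, Finset.coe_filter,
      Finset.mem_coe, Finset.mem_erase, Finset.mem_filter, Finset.mem_univ, true_and,
      Set.mem_setOf_eq]
    exact ⟨j, hj1, h1, hj2⟩
  have h1 : {ℓ : Fin p | ℓ ≠ i ∧ S i ℓ ≠ 0}.ncard ≤ B.card := by
    have := Set.ncard_le_ncard hsub B.finite_toSet
    rwa [Set.ncard_coe_finset] at this
  have hJc : J.card ≤ c := by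
    have : {j : Fin rS | V i j ≠ 0} = ↑J := by
      ext j; simp [hJ]
    have hm := hmem i
    rwa [this, Set.ncard_coe_finset] at hm
  have hper : ∀ j ∈ J, ((Finset.univ.filter fun ℓ => V ℓ j ≠ 0).erase i).card ≤ s - 1 := by
    intro j hj
    have hVij : V i j ≠ 0 := by simpa [hJ] using hj
    have hiF : i ∈ Finset.univ.filter fun ℓ => V ℓ j ≠ 0 := by simp [hVij]
    rw [Finset.card_erase_of_mem hiF]
    have hcard : (Finset.univ.filter fun ℓ => V ℓ j ≠ 0).card ≤ s := by
      have : {ℓ : Fin p | V ℓ j ≠ 0} = ↑(Finset.univ.filter fun ℓ => V ℓ j ≠ 0) := by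
        ext ℓ; simp
      have hsj := hsupp j
      rwa [this, Set.ncard_coe_finset] at hsj
    exact Nat.sub_le_sub_right hcard 1
  have h2 : B.card ≤ c * (s - 1) := by
    calc B.card ≤ ∑ j ∈ J, ((Finset.univ.filter fun ℓ => V ℓ j ≠ 0).erase i).card :=
          Finset.card_biUnion_le
      _ ≤ ∑ _j ∈ J, (s - 1) := Finset.sum_le_sum hper
      _ = J.card * (s - 1) := by rw [Finset.sum_const, smul_eq_mul]
      _ ≤ c * (s - 1) := Nat.mul_le_mul_right _ hJc
  exact h1.trans h2
end

section
/- Let D be a diagonal real p×p matrix with positive diagonal entries and V a real p×r_S matrix, and set A := I_{r_S} + Vᵀ D V. Define m := max_j |{k ≠ j : supp(V_{·j}) ∩ supp(V_{·k}) ≠ ∅}|, η := max_{j≠k} |V_{·j}ᵀ D V_{·k}|, τ_min := min_j A_{jj}, and ρ := m η / τ_min. If ρ < 1, then A is invertible and max_j Σ_{k≠j} |(A⁻¹)_{jk}| ≤ ρ / (τ_min (1 − ρ)) = m η / (τ_min² (1 − m η / τ_min)). -/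
open Matrix Finset

/-- **Controlled leakage under relaxed orthogonality.**
Let `D` be diagonal with positive diagonal entries, `V ∈ ℝ^{p×r_S}`, and
`A := I + Vᵀ D V`. Let `m` bound the number of columns whose support overlaps that of
any fixed column, `η` bound the cross-column Gram entries `|V_{·j}ᵀ D V_{·k}|` (`j ≠ k`),
`τmin` be a positive lower bound on the diagonal entries `A j j`, and
`ρ := m η / τmin`. If `ρ < 1`, then `A` is invertible and every off-diagonal absolute
row sum of `A⁻¹` is at most `ρ / (τmin (1 - ρ)) = m η / (τmin² (1 - m η / τmin))`. -/
theorem controlled_leakage {p rS : ℕ}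
    (D : Matrix (Fin p) (Fin p) ℝ) (hDdiag : D.IsDiag) (hDpos : ∀ i, 0 < D i i)
    (V : Matrix (Fin p) (Fin rS) ℝ)
    (A : Matrix (Fin rS) (Fin rS) ℝ) (hA : A = 1 + Vᵀ * D * V)
    (m : ℕ)
    (hm : ∀ j : Fin rS,
      {k : Fin rS | k ≠ j ∧ ({i | V i j ≠ 0} ∩ {i | V i k ≠ 0}).Nonempty}.ncard ≤ m)
    (η : ℝ) (hη0 : 0 ≤ η)
    (hη : ∀ j k : Fin rS, j ≠ k →
      |(fun i => V i j) ⬝ᵥ D.mulVec (fun i => V i k)| ≤ η)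
    (τmin : ℝ) (hτ0 : 0 < τmin) (hτ : ∀ j : Fin rS, τmin ≤ A j j)
    (ρ : ℝ) (hρ : ρ = m * η / τmin) (hρ1 : ρ < 1) :
    IsUnit A ∧
    (∀ j : Fin rS, ∑ k ∈ univ.filter (fun k => k ≠ j), |A⁻¹ j k| ≤
        ρ / (τmin * (1 - ρ))) ∧
    ρ / (τmin * (1 - ρ)) = m * η / (τmin ^ 2 * (1 - m * η / τmin)) := by
  classical
  have hτne : τmin ≠ 0 := ne_of_gt hτ0
  have hρ0 : 0 ≤ ρ := by rw [hρ]; positivity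
  have h1ρ : 0 < 1 - ρ := by linarith
  have hmη : (m : ℝ) * η < τmin := by
    have h := hρ1
    rw [hρ, div_lt_one hτ0] at h
    exact h
  have hmη0 : 0 ≤ (m : ℝ) * η := by positivity
  have hmηρ : (m : ℝ) * η = ρ * τmin := by
    rw [hρ]; field_simp
  -- diagonal action of D
  have hmulVec : ∀ (w : Fin p → ℝ) (i : Fin p), D.mulVec w i = D i i * w i := by
    intro w i
    simp only [Matrix.mulVec, dotProduct]
    refine Finset.sum_eq_single i ?_ (by simp)
    intro i' _ hne
    rw [hDdiag (Ne.symm hne), zero_mul]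
  have hdot : ∀ j k : Fin rS,
      (fun i => V i j) ⬝ᵥ D.mulVec (fun i => V i k) = ∑ i, V i j * (D i i * V i k) := by
    intro j k
    simp only [dotProduct, hmulVec]
  -- off-diagonal entries of A
  have hAoff : ∀ j k : Fin rS, j ≠ k → A j k = ∑ i, V i j * (D i i * V i k) := by
    intro j k hjk
    rw [hA]
    simp only [Matrix.add_apply, Matrix.one_apply_ne hjk, zero_add, Matrix.mul_apply]
    refine Finset.sum_congr rfl fun i _ => ?_
    have h1 : (∑ i', (Vᵀ) j i' * D i' i) = V i j * D i i := by
      refine Finset.sum_eq_single i ?_ (by simp)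
      intro i' _ hne
      rw [hDdiag hne, mul_zero]
    rw [h1]
    ring
  have hηA : ∀ j k : Fin rS, j ≠ k → |A j k| ≤ η := by
    intro j k hjk
    rw [hAoff j k hjk, ← hdot]
    exact hη j k hjk
  have hAzero : ∀ j k : Fin rS, j ≠ k →
      ¬({i | V i j ≠ 0} ∩ {i | V i k ≠ 0}).Nonempty → A j k = 0 := by
    intro j k hjk hdisj
    rw [hAoff j k hjk]
    refine Finset.sum_eq_zero fun i _ => ?_
    by_cases h0 : V i j = 0
    · rw [h0, zero_mul]
    · have hik : V i k = 0 := by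
        by_contra h1
        exact hdisj ⟨i, h0, h1⟩
      rw [hik, mul_zero, mul_zero]
  -- off-diagonal row sums of A
  have hrow : ∀ j : Fin rS, ∑ k ∈ univ.filter (fun k => k ≠ j), |A j k| ≤ m * η := by
    intro j
    set F : Finset (Fin rS) := univ.filter (fun k => k ≠ j ∧ A j k ≠ 0) with hF
    have hsub : F ⊆ univ.filter (fun k => k ≠ j) := by
      intro k hk
      simp only [hF, Finset.mem_filter, Finset.mem_univ, true_and] at hk ⊢
      exact hk.1
    have h1 : ∑ k ∈ univ.filter (fun k => k ≠ j), |A j k| = ∑ k ∈ F, |A j k| := by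
      refine (Finset.sum_subset hsub ?_).symm
      intro k hk hkF
      simp only [hF, Finset.mem_filter, Finset.mem_univ, true_and, not_and, not_not] at hk hkF
      rw [hkF hk, abs_zero]
    have hcard : (F.card : ℝ) ≤ m := by
      have hsub2 : (F : Set (Fin rS)) ⊆
          {k | k ≠ j ∧ ({i | V i j ≠ 0} ∩ {i | V i k ≠ 0}).Nonempty} := by
        intro k hk
        simp only [hF, Finset.coe_filter, Set.mem_setOf_eq, Finset.mem_univ, true_and] at hk
        refine ⟨hk.1, ?_⟩
        by_contra hno
        exact hk.2 (hAzero j k (Ne.symm hk.1) hno)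
      have h2 := Set.ncard_le_ncard hsub2 (Set.toFinite _)
      rw [Set.ncard_coe_finset] at h2
      exact_mod_cast h2.trans (hm j)
    calc ∑ k ∈ univ.filter (fun k => k ≠ j), |A j k| = ∑ k ∈ F, |A j k| := h1
      _ ≤ ∑ _k ∈ F, η := by
          refine Finset.sum_le_sum fun k hk => ?_
          simp only [hF, Finset.mem_filter, Finset.mem_univ, true_and] at hk
          exact hηA j k (Ne.symm hk.1)
      _ = F.card * η := by rw [Finset.sum_const, nsmul_eq_mul]
      _ ≤ m * η := mul_le_mul_of_nonneg_right hcard hη0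
  have hAjj : ∀ j : Fin rS, (0:ℝ) < A j j := fun j => lt_of_lt_of_le hτ0 (hτ j)
  -- invertibility via strict diagonal dominance
  have hUnit : IsUnit A := by
    rw [← Matrix.mulVec_injective_iff_isUnit]
    intro x y hxy
    by_contra hne
    set z : Fin rS → ℝ := x - y with hz
    have hz0 : z ≠ 0 := sub_ne_zero.mpr hne
    have hAz : A.mulVec z = 0 := by
      rw [hz, Matrix.mulVec_sub, hxy, sub_self]
    obtain ⟨k0, hk0⟩ := Function.ne_iff.mp hz0
    obtain ⟨k, -, hk⟩ := Finset.exists_max_image univ (fun k => |z k|) ⟨k0, Finset.mem_univ _⟩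
    have hzk : 0 < |z k| := lt_of_lt_of_le (abs_pos.mpr hk0) (hk k0 (Finset.mem_univ _))
    have hAzk : (∑ l, A k l * z l) = 0 := by
      have h := congrFun hAz k
      simpa [Matrix.mulVec, dotProduct] using h
    have hsplit : (∑ l, A k l * z l)
        = A k k * z k + ∑ l ∈ univ.filter (fun l => l ≠ k), A k l * z l := by
      rw [← Finset.sum_filter_add_sum_filter_not univ (fun l => l = k)]
      congr 1
      rw [Finset.filter_eq', if_pos (Finset.mem_univ k), Finset.sum_singleton]
    have hsplit2 : A k k * z k = -∑ l ∈ univ.filter (fun l => l ≠ k), A k l * z l := by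
      rw [hsplit] at hAzk
      linarith
    have hb : A k k * |z k| ≤ (m : ℝ) * η * |z k| := by
      calc A k k * |z k| = |A k k * z k| := by
            rw [abs_mul, abs_of_pos (hAjj k)]
        _ = |∑ l ∈ univ.filter (fun l => l ≠ k), A k l * z l| := by rw [hsplit2, abs_neg]
        _ ≤ ∑ l ∈ univ.filter (fun l => l ≠ k), |A k l * z l| := Finset.abs_sum_le_sum_abs _ _
        _ ≤ ∑ l ∈ univ.filter (fun l => l ≠ k), |A k l| * |z k| := by
            refine Finset.sum_le_sum fun l _ => ?_
            rw [abs_mul]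
            exact mul_le_mul_of_nonneg_left (hk l (Finset.mem_univ _)) (abs_nonneg _)
        _ = (∑ l ∈ univ.filter (fun l => l ≠ k), |A k l|) * |z k| := by rw [Finset.sum_mul]
        _ ≤ (m : ℝ) * η * |z k| := mul_le_mul_of_nonneg_right (hrow k) (abs_nonneg _)
    have hc : τmin * |z k| ≤ (m : ℝ) * η * |z k| :=
      le_trans (mul_le_mul_of_nonneg_right (hτ k) (abs_nonneg _)) hb
    nlinarith
  refine ⟨hUnit, ?_, ?_⟩
  · -- the quantitative bound
    have hdet : IsUnit A.det := (Matrix.isUnit_iff_isUnit_det A).mp hUnit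
    have hAB : A * A⁻¹ = 1 := Matrix.mul_nonsing_inv A hdet
    have hentry : ∀ j l : Fin rS, (∑ k, A j k * A⁻¹ k l) = if j = l then 1 else 0 := by
      intro j l
      have h := congrFun (congrFun hAB j) l
      rw [Matrix.mul_apply] at h
      rw [h, Matrix.one_apply]
    set C : Fin rS → Fin rS → ℝ :=
      fun j l => A⁻¹ j l - (if j = l then (A j j)⁻¹ else 0) with hC
    have hkey : ∀ j l : Fin rS,
        A j j * C j l = -∑ k ∈ univ.filter (fun k => k ≠ j), A j k * A⁻¹ k l := by
      intro j l
      have hsplit : (∑ k, A j k * A⁻¹ k l)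
          = A j j * A⁻¹ j l + ∑ k ∈ univ.filter (fun k => k ≠ j), A j k * A⁻¹ k l := by
        rw [← Finset.sum_filter_add_sum_filter_not univ (fun k => k = j)]
        congr 1
        rw [Finset.filter_eq', if_pos (Finset.mem_univ j), Finset.sum_singleton]
      have h2 := hentry j l
      rw [hsplit] at h2
      have h3 : A j j * C j l = A j j * A⁻¹ j l - (if j = l then 1 else 0) := by
        simp only [hC]
        rw [mul_sub]
        congr 1
        split_ifs with h
        · rw [mul_inv_cancel₀ (ne_of_gt (hAjj j))]
        · rw [mul_zero]
      rw [h3]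
      linarith
    set S : Fin rS → ℝ := fun j => ∑ l, |C j l| with hS
    have hS0 : ∀ j, 0 ≤ S j := fun j => Finset.sum_nonneg fun l _ => abs_nonneg _
    have hinvrow : ∀ k : Fin rS, (∑ l, |A⁻¹ k l|) ≤ S k + τmin⁻¹ := by
      intro k
      have h1 : ∀ l, |A⁻¹ k l| ≤ |C k l| + (if k = l then (A k k)⁻¹ else 0) := by
        intro l
        have he : A⁻¹ k l = C k l + (if k = l then (A k k)⁻¹ else 0) := by
          simp only [hC]; ring
        rw [he]
        refine (abs_add_le _ _).trans ?_
        gcongr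
        rw [abs_of_nonneg]
        split_ifs with h
        · exact inv_nonneg.mpr (le_of_lt (hAjj k))
        · exact le_refl 0
      calc (∑ l, |A⁻¹ k l|) ≤ ∑ l, (|C k l| + (if k = l then (A k k)⁻¹ else 0)) :=
            Finset.sum_le_sum fun l _ => h1 l
        _ = S k + (A k k)⁻¹ := by
            rw [Finset.sum_add_distrib]
            congr 1
            simp
        _ ≤ S k + τmin⁻¹ := by
            gcongr
            exact hτ k
    -- the fixed-point estimate on row sums of C
    have hSbound : ∀ j, S j ≤ ρ / (τmin * (1 - ρ)) := by
      intro j0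
      rcases isEmpty_or_nonempty (Fin rS) with hemp | hne
      · exact (IsEmpty.false j0).elim
      obtain ⟨j, -, hj⟩ := Finset.exists_max_image univ S ⟨Classical.arbitrary _, Finset.mem_univ _⟩
      have hmain : τmin * S j ≤ (m : ℝ) * η * (S j + τmin⁻¹) := by
        calc τmin * S j ≤ A j j * S j :=
              mul_le_mul_of_nonneg_right (hτ j) (hS0 j)
          _ = ∑ l, A j j * |C j l| := by rw [hS, Finset.mul_sum]
          _ = ∑ l, |A j j * C j l| := by
              refine Finset.sum_congr rfl fun l _ => ?_
              rw [abs_mul, abs_of_pos (hAjj j)]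
          _ = ∑ l, |∑ k ∈ univ.filter (fun k => k ≠ j), A j k * A⁻¹ k l| := by
              refine Finset.sum_congr rfl fun l _ => ?_
              rw [hkey j l, abs_neg]
          _ ≤ ∑ l, ∑ k ∈ univ.filter (fun k => k ≠ j), |A j k * A⁻¹ k l| :=
              Finset.sum_le_sum fun l _ => Finset.abs_sum_le_sum_abs _ _
          _ = ∑ k ∈ univ.filter (fun k => k ≠ j), ∑ l, |A j k * A⁻¹ k l| :=
              Finset.sum_comm
          _ = ∑ k ∈ univ.filter (fun k => k ≠ j), |A j k| * (∑ l, |A⁻¹ k l|) := by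
              refine Finset.sum_congr rfl fun k _ => ?_
              rw [Finset.mul_sum]
              exact Finset.sum_congr rfl fun l _ => abs_mul _ _
          _ ≤ ∑ k ∈ univ.filter (fun k => k ≠ j), |A j k| * (S j + τmin⁻¹) := by
              refine Finset.sum_le_sum fun k _ => ?_
              refine mul_le_mul_of_nonneg_left ?_ (abs_nonneg _)
              exact (hinvrow k).trans (by gcongr; exact hj k (Finset.mem_univ _))
          _ = (∑ k ∈ univ.filter (fun k => k ≠ j), |A j k|) * (S j + τmin⁻¹) := by
              rw [Finset.sum_mul]
          _ ≤ (m : ℝ) * η * (S j + τmin⁻¹) := by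
              refine mul_le_mul_of_nonneg_right (hrow j) ?_
              have := hS0 j
              positivity
      have hSj : S j ≤ ρ / (τmin * (1 - ρ)) := by
        have hexp : ρ * τmin * (S j + τmin⁻¹) = ρ * τmin * S j + ρ := by
          field_simp
        rw [hmηρ, hexp] at hmain
        rw [le_div_iff₀ (by positivity : (0:ℝ) < τmin * (1 - ρ))]
        nlinarith [hS0 j]
      exact (hj j0 (Finset.mem_univ _)).trans hSj
    intro j
    have h1 : ∑ k ∈ univ.filter (fun k => k ≠ j), |A⁻¹ j k|
        = ∑ k ∈ univ.filter (fun k => k ≠ j), |C j k| := by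
      refine Finset.sum_congr rfl fun k hk => ?_
      simp only [Finset.mem_filter, Finset.mem_univ, true_and] at hk
      have hck : C j k = A⁻¹ j k := by
        simp only [hC, if_neg (Ne.symm hk), sub_zero]
      rw [hck]
    rw [h1]
    refine le_trans ?_ (hSbound j)
    simp only [hS]
    exact Finset.sum_le_sum_of_subset_of_nonneg (Finset.filter_subset _ _)
      fun k _ _ => abs_nonneg _
  · -- the algebraic identity
    subst hρ
    rw [div_div]
    congr 1
    ring
end

section
/- Let B be a real p×p matrix, let T := I − B, and suppose the (in+out)-degree of B is at most d, i.e., for every index i, |{j : B_{ij} ≠ 0}| + |{j : B_{ji} ≠ 0}| ≤ d. Let M be a real p×p matrix that is k-row-sparse, i.e., every row of M has at most k nonzero entries. Then every row of T M Tᵀ has at most k(1+d)² nonzero entries. -/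
open Matrix Finset

/-- **Row-sparse structure preservation under T-congruence.**
Let `B` be a real `p × p` matrix whose (in+out)-degree is at most `d`
(for every `i`, the number of nonzeros in row `i` of `B` plus the number of nonzeros
in column `i` of `B` is at most `d`), let `T := I - B`, and let `M` be `k`-row-sparse
(every row of `M` has at most `k` nonzero entries). Then every row of `T M Tᵀ` has at
most `k * (1 + d)²` nonzero entries. -/
theorem congruence_preserves_row_sparsity {p : ℕ} (d k : ℕ)
    (B : Matrix (Fin p) (Fin p) ℝ)
    (hdeg : ∀ i : Fin p,
      (univ.filter fun j => B i j ≠ 0).card + (univ.filter fun j => B j i ≠ 0).card ≤ d)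
    (T : Matrix (Fin p) (Fin p) ℝ) (hT : T = 1 - B)
    (M : Matrix (Fin p) (Fin p) ℝ)
    (hM : ∀ i : Fin p, (univ.filter fun ℓ => M i ℓ ≠ 0).card ≤ k) :
    ∀ i : Fin p, (univ.filter fun j => (T * M * Tᵀ) i j ≠ 0).card ≤ k * (1 + d) ^ 2 := by
  intro i
  -- Row of T has ≤ 1 + d nonzeros; columns of T too.
  have hTrow : ∀ x : Fin p, (univ.filter fun a => T x a ≠ 0).card ≤ 1 + d := by
    intro x
    have hsub : (univ.filter fun a => T x a ≠ 0)
        ⊆ insert x (univ.filter fun a => B x a ≠ 0) := by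
      intro a ha
      simp only [mem_filter, mem_univ, true_and] at ha
      by_cases h : a = x
      · simp [h]
      · refine mem_insert_of_mem ?_
        simp only [mem_filter, mem_univ, true_and]
        intro hB
        refine ha ?_
        simp [hT, Matrix.sub_apply, Matrix.one_apply, hB]
        exact fun hh => h hh.symm
    have h1 := card_le_card hsub
    have h2 := card_insert_le x (univ.filter fun a => B x a ≠ 0)
    have h3 := hdeg x
    omega
  have hTcol : ∀ b : Fin p, (univ.filter fun j => T j b ≠ 0).card ≤ 1 + d := by
    intro b
    have hsub : (univ.filter fun j => T j b ≠ 0)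
        ⊆ insert b (univ.filter fun j => B j b ≠ 0) := by
      intro j hj
      simp only [mem_filter, mem_univ, true_and] at hj
      by_cases h : j = b
      · simp [h]
      · refine mem_insert_of_mem ?_
        simp only [mem_filter, mem_univ, true_and]
        intro hB
        refine hj ?_
        simp [hT, Matrix.sub_apply, Matrix.one_apply, h, hB]
    have h1 := card_le_card hsub
    have h2 := card_insert_le b (univ.filter fun j => B j b ≠ 0)
    have h3 := hdeg b
    omega
  -- nonzero entries lie in a union of columns supports
  have hsubset : (univ.filter fun j => (T * M * Tᵀ) i j ≠ 0)
      ⊆ (univ.filter fun a => T i a ≠ 0).biUnion (fun a =>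
          (univ.filter fun b => M a b ≠ 0).biUnion (fun b =>
            univ.filter fun j => T j b ≠ 0)) := by
    intro j hj
    simp only [mem_filter, mem_univ, true_and] at hj
    obtain ⟨b, hb⟩ : ∃ b, (T * M) i b * T j b ≠ 0 := by
      by_contra h
      push_neg at h
      apply hj
      rw [Matrix.mul_apply]
      exact Finset.sum_eq_zero fun b _ => by
        simpa [Matrix.transpose_apply] using h b
    have hTM : (T * M) i b ≠ 0 := fun hz => hb (by simp [hz])
    have hTjb : T j b ≠ 0 := fun hz => hb (by simp [hz])
    obtain ⟨a, ha⟩ : ∃ a, T i a * M a b ≠ 0 := by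
      by_contra h
      push_neg at h
      apply hTM
      rw [Matrix.mul_apply]
      exact Finset.sum_eq_zero fun a _ => h a
    have hTia : T i a ≠ 0 := fun hz => ha (by simp [hz])
    have hMab : M a b ≠ 0 := fun hz => ha (by simp [hz])
    simp only [mem_biUnion, mem_filter, mem_univ, true_and]
    exact ⟨a, hTia, b, hMab, hTjb⟩
  calc (univ.filter fun j => (T * M * Tᵀ) i j ≠ 0).card
      ≤ ((univ.filter fun a => T i a ≠ 0).biUnion (fun a =>
          (univ.filter fun b => M a b ≠ 0).biUnion (fun b =>
            univ.filter fun j => T j b ≠ 0))).card := card_le_card hsubset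
    _ ≤ ∑ a ∈ univ.filter fun a => T i a ≠ 0,
          ((univ.filter fun b => M a b ≠ 0).biUnion (fun b =>
            univ.filter fun j => T j b ≠ 0)).card := card_biUnion_le
    _ ≤ ∑ a ∈ univ.filter fun a => T i a ≠ 0, (k * (1 + d)) := by
        refine Finset.sum_le_sum fun a _ => ?_
        calc ((univ.filter fun b => M a b ≠ 0).biUnion (fun b =>
                univ.filter fun j => T j b ≠ 0)).card
            ≤ ∑ b ∈ univ.filter fun b => M a b ≠ 0,
                (univ.filter fun j => T j b ≠ 0).card := card_biUnion_le
          _ ≤ ∑ b ∈ univ.filter fun b => M a b ≠ 0, (1 + d) :=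
              Finset.sum_le_sum fun b _ => hTcol b
          _ = (univ.filter fun b => M a b ≠ 0).card * (1 + d) := by
              rw [Finset.sum_const, smul_eq_mul]
          _ ≤ k * (1 + d) := Nat.mul_le_mul_right _ (hM a)
    _ = (univ.filter fun a => T i a ≠ 0).card * (k * (1 + d)) := by
        rw [Finset.sum_const, smul_eq_mul]
    _ ≤ (1 + d) * (k * (1 + d)) := Nat.mul_le_mul_right _ (hTrow i)
    _ = k * (1 + d) ^ 2 := by ring
end
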